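/- Let m, n ≥ 2 be integers, let V(P_n) = {v₁, …, vₙ} with vᵢ adjacent to vᵢ₊₁, and let Z ⊆ E(K_m ⊠ P_n) with |Z| < ⌈3m/2⌉. Then there exists a vertex w ∈ V(K_m) × {v₁, v₂} such that every vertex of V(K_m) × {v₁} lies in the closed neighborhood of w in the graph K_m ⊠ P_n − Z. -/
import Mathlib


open SimpleGraph Finset

/-- `D` is a dominating set of `G`: every vertex is in `D` or adjacent to a vertex of `D`. -/
def SimpleGraph.IsDominatingSet {V : Type*} (G : SimpleGraph V) (D : Set V) : Prop :=
  ∀ v : V, v ∈ D ∨ ∃ u ∈ D, G.Adj u v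

/-- The domination number of a finite graph. -/
noncomputable def SimpleGraph.dominationNumber {V : Type*} [Fintype V]
    (G : SimpleGraph V) : ℕ :=
  sInf {k | ∃ D : Finset V, D.card = k ∧ G.IsDominatingSet ↑D}

/-- The bondage number of a finite graph: the least size of a set of edges whose removal
increases the domination number. -/
noncomputable def SimpleGraph.bondageNumber {V : Type*} [Fintype V]
    (G : SimpleGraph V) : ℕ :=
  sInf {k | ∃ Z : Finset (Sym2 V), Z.card = k ∧ (↑Z : Set (Sym2 V)) ⊆ G.edgeSet ∧
    G.dominationNumber < (G.deleteEdges ↑Z).dominationNumber}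

/-- The strong product of two simple graphs. -/
def SimpleGraph.strongProd {V W : Type*} (G : SimpleGraph V) (H : SimpleGraph W) :
    SimpleGraph (V × W) :=
  SimpleGraph.fromRel (fun a b =>
    (a.1 = b.1 ∧ H.Adj a.2 b.2) ∨ (G.Adj a.1 b.1 ∧ a.2 = b.2) ∨
      (G.Adj a.1 b.1 ∧ H.Adj a.2 b.2))

infixl:70 " ⊠ " => SimpleGraph.strongProd

lemma base_adj' {m n : ℕ} (hn : 2 ≤ n)
    (w u : Fin m × Fin n) (hw : (w.2 : ℕ) < 2) (hu : (u.2 : ℕ) = 0) (hne : u ≠ w) :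
    (((⊤ : SimpleGraph (Fin m)) ⊠ pathGraph n)).Adj w u := by
  rw [SimpleGraph.strongProd, SimpleGraph.fromRel_adj]
  refine ⟨fun h => hne h.symm, Or.inl ?_⟩
  rcases (by omega : (w.2 : ℕ) = 0 ∨ (w.2 : ℕ) = 1) with h1 | h1
  · have h2 : w.2 = u.2 := Fin.ext (by omega)
    have h3 : w.1 ≠ u.1 := by
      intro h; exact hne (Prod.ext h.symm h2.symm)
    exact Or.inr (Or.inl ⟨by simpa using h3, h2⟩)
  · have hp : (pathGraph n).Adj w.2 u.2 := pathGraph_adj.mpr (Or.inr (by omega))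
    by_cases h3 : w.1 = u.1
    · exact Or.inl ⟨h3, hp⟩
    · exact Or.inr (Or.inr ⟨by simpa using h3, hp⟩)

/-- **Lemma.** Let `m, n ≥ 2` and `Z ⊆ E(K_m ⊠ P_n)` with `|Z| < ⌈3m/2⌉`
(vertices of `P_n` are `v₁, …, vₙ`, with `vᵢ` the element of `Fin n` of value `i - 1`).
Then some vertex `w` of `V(K_m) × {v₁, v₂}` dominates all of `V(K_m) × {v₁}` in
`K_m ⊠ P_n − Z`, i.e. every vertex of `V(K_m) × {v₁}` is in the closed neighborhood
of `w`. -/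
theorem exists_dominator_of_first_fiber (m n : ℕ) (hm : 2 ≤ m) (hn : 2 ≤ n)
    (Z : Finset (Sym2 (Fin m × Fin n)))
    (hZ : (↑Z : Set (Sym2 (Fin m × Fin n))) ⊆
      ((⊤ : SimpleGraph (Fin m)) ⊠ pathGraph n).edgeSet)
    (hcard : Z.card < (3 * m + 1) / 2) :
    ∃ w : Fin m × Fin n, (w.2 : ℕ) < 2 ∧
      ∀ u : Fin m × Fin n, (u.2 : ℕ) = 0 →
        u = w ∨ (((⊤ : SimpleGraph (Fin m)) ⊠ pathGraph n).deleteEdges ↑Z).Adj w u := by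
  by_contra hcon
  push_neg at hcon
  set v0 : Fin n := ⟨0, by omega⟩ with hv0
  set v1 : Fin n := ⟨1, by omega⟩ with hv1
  -- for every candidate w, some u in the first fiber is not dominated; extract the deleted edge
  have key : ∀ w : Fin m × Fin n, (w.2 : ℕ) < 2 →
      ∃ u : Fin m × Fin n, (u.2 : ℕ) = 0 ∧ u ≠ w ∧ s(w, u) ∈ Z := by
    intro w hw
    obtain ⟨u, hu0, hune, hnadj⟩ := hcon w hw
    refine ⟨u, hu0, hune, ?_⟩
    by_contra hz
    exact hnadj (SimpleGraph.deleteEdges_adj.mpr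
      ⟨base_adj' hn w u hw hu0 hune, hz⟩)
  choose g hg0 hgne hgZ using key
  -- the two families of deleted edges
  set e0 : Fin m → Sym2 (Fin m × Fin n) :=
    fun i => s(((i, v0) : Fin m × Fin n), g (i, v0) (by simp [hv0])) with he0
  set e1 : Fin m → Sym2 (Fin m × Fin n) :=
    fun i => s(((i, v1) : Fin m × Fin n), g (i, v1) (by simp [hv1])) with he1
  set E0 : Finset (Sym2 (Fin m × Fin n)) := Finset.univ.image e0 with hE0
  set E1 : Finset (Sym2 (Fin m × Fin n)) := Finset.univ.image e1 with hE1
  -- E1 has m elements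
  have hE1card : E1.card = m := by
    rw [hE1, Finset.card_image_of_injective _ ?_, Finset.card_univ, Fintype.card_fin]
    intro i j hij
    rw [he1, Sym2.eq_iff] at hij
    rcases hij with ⟨h1, _⟩ | ⟨h1, h2⟩
    · exact (Prod.mk.injEq .. ▸ h1).1
    · exfalso
      have := hg0 (j, v1) (by simp [hv1])
      rw [← h1] at this
      simp [hv1] at this
  -- fibers of e0 have size at most 2
  have hfib : ∀ b ∈ Finset.univ.image e0,
      (Finset.univ.filter fun i : Fin m => e0 i = b).card ≤ 2 := by
    intro b hb
    induction b using Sym2.ind with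
    | _ p q =>
      have hsub : (Finset.univ.filter fun i : Fin m => e0 i = s(p, q)) ⊆ {p.1, q.1} := by
        intro i hi
        simp only [Finset.mem_filter] at hi
        rw [he0, Sym2.eq_iff] at hi
        rcases hi.2 with ⟨h1, _⟩ | ⟨h1, _⟩
        · simp [← h1]
        · simp [← h1]
      exact (Finset.card_le_card hsub).trans
        ((Finset.card_insert_le _ _).trans (by simp))
  have hE0card : m ≤ 2 * E0.card := by
    have h := Finset.card_le_mul_card_image (f := e0) Finset.univ 2 hfib
    simpa [hE0] using h
  -- E0 and E1 are disjoint
  have hdisj : Disjoint E0 E1 := by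
    rw [Finset.disjoint_left]
    intro a ha0 ha1
    rw [hE0, Finset.mem_image] at ha0
    rw [hE1, Finset.mem_image] at ha1
    obtain ⟨i, _, hi⟩ := ha0
    obtain ⟨j, _, hj⟩ := ha1
    rw [← hj, he0, he1, Sym2.eq_iff] at hi
    rcases hi with ⟨h1, h2⟩ | ⟨h1, h2⟩
    · have := congrArg (fun x : Fin m × Fin n => (x.2 : ℕ)) h1
      simp [hv0, hv1] at this
    · have := hg0 (i, v0) (by simp [hv0])
      rw [h2] at this
      simp [hv1] at this
  -- both are contained in Z
  have hsubZ : E0 ∪ E1 ⊆ Z := by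
    intro a ha
    rw [Finset.mem_union] at ha
    rcases ha with ha | ha <;> rw [Finset.mem_image] at ha <;>
      obtain ⟨i, _, hi⟩ := ha <;> rw [← hi]
    · exact hgZ (i, v0) _
    · exact hgZ (i, v1) _
  have hc : E0.card + E1.card ≤ Z.card := by
    rw [← Finset.card_union_of_disjoint hdisj]
    exact Finset.card_le_card hsubZ
  omega
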